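/- arXiv:hep-th/9703082 — 8 statements merged into one kernel-verified Lean document; each statement's English description precedes it below -/
import Mathlib

section
/- Let S = [[A,B],[C,D]] ∈ Sp(2m,ℝ) and let X, Y be complex m×m matrices with X invertible, Y X^{-1} symmetric, and Im(Y X^{-1}) negative definite. Define X̃ = AX + BY and Ỹ = CX + DY. Then X̃ is invertible, Ỹ X̃^{-1} is symmetric, and Im(Ỹ X̃^{-1}) is negative definite. -/
open Matrix

lemma quad_re {m : ℕ} (S : Matrix (Fin m) (Fin m) ℝ) (u : Fin m → ℂ) :
    (star u ⬝ᵥ ((S.map Complex.ofReal) *ᵥ u)).re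
      = (fun i => (u i).re) ⬝ᵥ (S *ᵥ fun i => (u i).re)
        + (fun i => (u i).im) ⬝ᵥ (S *ᵥ fun i => (u i).im) := by
  simp only [dotProduct, mulVec, Matrix.map_apply, Pi.star_apply, Finset.mul_sum,
    Complex.re_sum, ← Finset.sum_add_distrib]
  refine Finset.sum_congr rfl fun i _ => Finset.sum_congr rfl fun j _ => ?_
  simp [Complex.mul_re, Complex.mul_im]

lemma sub_conj_mat {m : ℕ} (P : Matrix (Fin m) (Fin m) ℂ) :
    P - P.map (starRingEnd ℂ) = ((2:ℂ)*Complex.I) • ((P.map Complex.im).map Complex.ofReal) := by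
  ext i j
  simp only [Matrix.sub_apply, Matrix.map_apply, Matrix.smul_apply, smul_eq_mul]
  rw [Complex.sub_conj]
  push_cast
  ring

lemma cast_quad {m : ℕ} (S : Matrix (Fin m) (Fin m) ℝ) (x : Fin m → ℝ) :
    ((fun i => (x i : ℂ)) ⬝ᵥ ((S.map Complex.ofReal) *ᵥ fun i => (x i : ℂ)))
      = ((x ⬝ᵥ (S *ᵥ x) : ℝ) : ℂ) := by
  simp only [dotProduct, mulVec, Matrix.map_apply]
  push_cast
  ring

lemma quad_neg {m : ℕ} (S : Matrix (Fin m) (Fin m) ℝ)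
    (hneg : ∀ x : Fin m → ℝ, x ≠ 0 → x ⬝ᵥ (S *ᵥ x) < 0)
    (u : Fin m → ℂ) (hu : u ≠ 0) :
    (star u ⬝ᵥ ((S.map Complex.ofReal) *ᵥ u)).re < 0 := by
  rw [quad_re]
  have hle : ∀ x : Fin m → ℝ, x ⬝ᵥ (S *ᵥ x) ≤ 0 := by
    intro x
    by_cases hx : x = 0
    · simp [hx]
    · exact (hneg x hx).le
  have hab : (fun i => (u i).re) ≠ 0 ∨ (fun i => (u i).im) ≠ 0 := by
    by_contra h
    push_neg at h
    apply hu
    funext i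
    have h1 := congrFun h.1 i
    have h2 := congrFun h.2 i
    simp only [Pi.zero_apply] at h1 h2 ⊢
    exact Complex.ext h1 h2
  rcases hab with h | h
  · have := hneg _ h
    have := hle (fun i => (u i).im)
    linarith
  · have := hneg _ h
    have := hle (fun i => (u i).re)
    linarith

/-- Symplectic transformations preserve: `X` invertible, `YX⁻¹` symmetric,
`Im (YX⁻¹)` negative definite. -/
theorem stmt5 {m : ℕ} (A B C D : Matrix (Fin m) (Fin m) ℝ)
    (h1 : Aᵀ * C = Cᵀ * A) (h2 : Bᵀ * D = Dᵀ * B) (h3 : Aᵀ * D - Cᵀ * B = 1)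
    (X Y : Matrix (Fin m) (Fin m) ℂ)
    (hX : IsUnit X.det)
    (hsym : (Y * X⁻¹)ᵀ = Y * X⁻¹)
    (hneg : ∀ x : Fin m → ℝ, x ≠ 0 → x ⬝ᵥ (((Y * X⁻¹).map Complex.im) *ᵥ x) < 0) :
    IsUnit (A.map Complex.ofReal * X + B.map Complex.ofReal * Y).det ∧
    ((C.map Complex.ofReal * X + D.map Complex.ofReal * Y) *
        (A.map Complex.ofReal * X + B.map Complex.ofReal * Y)⁻¹)ᵀ
      = (C.map Complex.ofReal * X + D.map Complex.ofReal * Y) *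
        (A.map Complex.ofReal * X + B.map Complex.ofReal * Y)⁻¹ ∧
    ∀ x : Fin m → ℝ, x ≠ 0 →
      x ⬝ᵥ ((((C.map Complex.ofReal * X + D.map Complex.ofReal * Y) *
        (A.map Complex.ofReal * X + B.map Complex.ofReal * Y)⁻¹).map Complex.im) *ᵥ x) < 0 := by
  have hmapmul : ∀ P Q : Matrix (Fin m) (Fin m) ℝ,
      (P * Q).map Complex.ofReal = P.map Complex.ofReal * Q.map Complex.ofReal := by
    intro P Q; ext i j
    simp only [Matrix.mul_apply, Matrix.map_apply]
    push_cast; rfl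
  have hmaptr : ∀ P : Matrix (Fin m) (Fin m) ℝ,
      (Pᵀ).map Complex.ofReal = (P.map Complex.ofReal)ᵀ := by
    intro P; ext i j; simp [Matrix.map_apply]
  have hmapsub : ∀ P Q : Matrix (Fin m) (Fin m) ℝ,
      (P - Q).map Complex.ofReal = P.map Complex.ofReal - Q.map Complex.ofReal := by
    intro P Q; ext i j; simp [Matrix.map_apply]
  have hmapone : (1 : Matrix (Fin m) (Fin m) ℝ).map Complex.ofReal = 1 := by
    ext i j; simp [Matrix.map_apply, Matrix.one_apply, apply_ite Complex.ofReal]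
  set A' := A.map Complex.ofReal with hA'
  set B' := B.map Complex.ofReal with hB'
  set C' := C.map Complex.ofReal with hC'
  set D' := D.map Complex.ofReal with hD'
  set M := Y * X⁻¹ with hMdef
  set Mc := M.map (starRingEnd ℂ) with hMc
  set W := A' + B' * M with hW
  set Z := C' + D' * M with hZ
  -- complex versions of the symplectic relations
  have hc1 : A'ᵀ * C' - C'ᵀ * A' = 0 := by
    have h := congrArg (fun P : Matrix (Fin m) (Fin m) ℝ => P.map Complex.ofReal) h1
    simp only [hmapmul, hmaptr] at h
    rw [← hA', ← hC'] at h
    rw [h, sub_self]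
  have hc2 : B'ᵀ * D' - D'ᵀ * B' = 0 := by
    have h := congrArg (fun P : Matrix (Fin m) (Fin m) ℝ => P.map Complex.ofReal) h2
    simp only [hmapmul, hmaptr] at h
    rw [← hB', ← hD'] at h
    rw [h, sub_self]
  have hc3 : A'ᵀ * D' - C'ᵀ * B' = 1 := by
    have h := congrArg (fun P : Matrix (Fin m) (Fin m) ℝ => P.map Complex.ofReal) h3
    simp only [hmapsub, hmapmul, hmaptr, hmapone] at h
    rw [← hA', ← hB', ← hC', ← hD'] at h
    exact h
  have hc4 : B'ᵀ * C' - D'ᵀ * A' = -1 := by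
    have h := congrArg Matrix.transpose h3
    simp only [Matrix.transpose_sub, Matrix.transpose_mul, Matrix.transpose_transpose,
      Matrix.transpose_one] at h
    have h' := congrArg (fun P : Matrix (Fin m) (Fin m) ℝ => P.map Complex.ofReal) h
    simp only [hmapsub, hmapmul, hmaptr, hmapone] at h'
    rw [← hA', ← hB', ← hC', ← hD'] at h'
    -- h' : D'ᵀ * A' - B'ᵀ * C' = 1
    linear_combination (norm := noncomm_ring) -h'
  -- conjugation facts
  have hAH : A'ᴴ = A'ᵀ := by
    ext i j; simp [Matrix.conjTranspose_apply, Matrix.map_apply, hA']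
  have hBH : B'ᴴ = B'ᵀ := by
    ext i j; simp [Matrix.conjTranspose_apply, Matrix.map_apply, hB']
  have hCH : C'ᴴ = C'ᵀ := by
    ext i j; simp [Matrix.conjTranspose_apply, Matrix.map_apply, hC']
  have hDH : D'ᴴ = D'ᵀ := by
    ext i j; simp [Matrix.conjTranspose_apply, Matrix.map_apply, hD']
  have hMH : Mᴴ = Mc := by
    ext i j
    have := congrFun (congrFun hsym i) j
    simp only [Matrix.transpose_apply] at this
    simp [Matrix.conjTranspose_apply, hMc, Matrix.map_apply, this, Complex.star_def]
  -- key identities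
  have hWT : Wᵀ = A'ᵀ + M * B'ᵀ := by
    rw [hW, Matrix.transpose_add, Matrix.transpose_mul, hsym]
  have hZT : Zᵀ = C'ᵀ + M * D'ᵀ := by
    rw [hZ, Matrix.transpose_add, Matrix.transpose_mul, hsym]
  have hWH : Wᴴ = A'ᵀ + Mc * B'ᵀ := by
    rw [hW, Matrix.conjTranspose_add, Matrix.conjTranspose_mul, hAH, hBH, hMH]
  have hZH : Zᴴ = C'ᵀ + Mc * D'ᵀ := by
    rw [hZ, Matrix.conjTranspose_add, Matrix.conjTranspose_mul, hCH, hDH, hMH]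
  have KI1 : Wᵀ * Z = Zᵀ * W := by
    have expand : (A'ᵀ + M * B'ᵀ) * (C' + D' * M) - (C'ᵀ + M * D'ᵀ) * (A' + B' * M)
        = (A'ᵀ * C' - C'ᵀ * A') + (A'ᵀ * D' - C'ᵀ * B') * M
          + M * (B'ᵀ * C' - D'ᵀ * A') + M * ((B'ᵀ * D' - D'ᵀ * B') * M) := by
      noncomm_ring
    have h0 : Wᵀ * Z - Zᵀ * W = 0 := by
      rw [hWT, hZT, hZ, hW, expand, hc1, hc2, hc3, hc4]
      noncomm_ring
    exact sub_eq_zero.1 h0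
  have KI2 : Wᴴ * Z - Zᴴ * W = M - Mc := by
    have expand : (A'ᵀ + Mc * B'ᵀ) * (C' + D' * M) - (C'ᵀ + Mc * D'ᵀ) * (A' + B' * M)
        = (A'ᵀ * C' - C'ᵀ * A') + (A'ᵀ * D' - C'ᵀ * B') * M
          + Mc * (B'ᵀ * C' - D'ᵀ * A') + Mc * ((B'ᵀ * D' - D'ᵀ * B') * M) := by
      noncomm_ring
    rw [hWH, hZH, hZ, hW, expand, hc1, hc2, hc3, hc4]
    noncomm_ring
  -- invertibility of W
  have hdetW : IsUnit W.det := by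
    rw [isUnit_iff_ne_zero]
    intro hdet
    obtain ⟨u, hu0, hWu⟩ := Matrix.exists_mulVec_eq_zero_iff.2 hdet
    have e0 : star u ⬝ᵥ ((Wᴴ * Z - Zᴴ * W) *ᵥ u) = 0 := by
      rw [Matrix.sub_mulVec, dotProduct_sub, ← Matrix.mulVec_mulVec, ← Matrix.mulVec_mulVec,
        hWu, Matrix.mulVec_zero, dotProduct_zero, dotProduct_mulVec, ← Matrix.star_mulVec, hWu]
      simp
    rw [KI2, hMc, sub_conj_mat M, smul_mulVec, dotProduct_smul, smul_eq_mul] at e0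
    have h2I : (2 : ℂ) * Complex.I ≠ 0 := by simp [Complex.I_ne_zero]
    have e1 : star u ⬝ᵥ ((M.map Complex.im).map Complex.ofReal *ᵥ u) = 0 :=
      (mul_eq_zero.1 e0).resolve_left h2I
    have hq := quad_neg (M.map Complex.im) hneg u hu0
    rw [e1] at hq
    simp at hq
  -- relating to the goal matrices
  have hMX : M * X = Y := by
    rw [hMdef, Matrix.mul_assoc, Matrix.nonsing_inv_mul X hX, Matrix.mul_one]
  have hXt : A' * X + B' * Y = W * X := by
    rw [hW, Matrix.add_mul, Matrix.mul_assoc, hMX]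
  have hYt : C' * X + D' * Y = Z * X := by
    rw [hZ, Matrix.add_mul, Matrix.mul_assoc, hMX]
  have hdetWX : IsUnit (W * X).det := by
    rw [Matrix.det_mul]; exact hdetW.mul hX
  have hN : (C' * X + D' * Y) * (A' * X + B' * Y)⁻¹ = Z * W⁻¹ := by
    rw [hXt, hYt, Matrix.mul_inv_rev, Matrix.mul_assoc, ← Matrix.mul_assoc X,
      Matrix.mul_nonsing_inv X hX, Matrix.one_mul]
  set N := Z * W⁻¹ with hNdef
  have hNW : N * W = Z := by
    rw [hNdef, Matrix.mul_assoc, Matrix.nonsing_inv_mul W hdetW, Matrix.mul_one]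
  have hNsym : Nᵀ = N := by
    rw [hNdef, Matrix.transpose_mul, Matrix.transpose_nonsing_inv]
    have h5 : Zᵀ = Wᵀ * (Z * W⁻¹) := by
      rw [← Matrix.mul_assoc, KI1, Matrix.mul_assoc, Matrix.mul_nonsing_inv W hdetW,
        Matrix.mul_one]
    rw [h5, ← Matrix.mul_assoc, Matrix.nonsing_inv_mul Wᵀ (by rwa [Matrix.det_transpose]),
      Matrix.one_mul]
  refine ⟨by rw [hXt]; exact hdetWX, by rw [hN]; exact hNsym, ?_⟩
  intro x hx
  rw [hN]
  have hNH : Nᴴ = N.map (starRingEnd ℂ) := by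
    ext i j
    have := congrFun (congrFun hNsym i) j
    simp only [Matrix.transpose_apply] at this
    simp [Matrix.conjTranspose_apply, Matrix.map_apply, this, Complex.star_def]
  have KI3 : Wᴴ * (N - N.map (starRingEnd ℂ)) * W = M - Mc := by
    rw [Matrix.mul_sub, Matrix.sub_mul]
    have t1 : Wᴴ * N * W = Wᴴ * Z := by rw [Matrix.mul_assoc, hNW]
    have t2 : Wᴴ * N.map (starRingEnd ℂ) * W = Zᴴ * W := by
      rw [← hNH]
      have h6 : Wᴴ * Nᴴ = Zᴴ := by rw [← Matrix.conjTranspose_mul, hNW]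
      rw [h6]
    rw [t1, t2, KI2]
  set xc : Fin m → ℂ := fun i => (x i : ℂ) with hxc
  have hxc0 : xc ≠ 0 := by
    intro h; apply hx; funext i
    have := congrFun h i
    simpa [hxc] using this
  set u := W⁻¹ *ᵥ xc with hu
  have hWu : W *ᵥ u = xc := by
    rw [hu, Matrix.mulVec_mulVec, Matrix.mul_nonsing_inv W hdetW, Matrix.one_mulVec]
  have hu0 : u ≠ 0 := by
    intro h; apply hxc0; rw [← hWu, h, Matrix.mulVec_zero]
  have hstarxc : star xc = xc := by funext i; simp [hxc]
  have key : star xc ⬝ᵥ ((N - N.map (starRingEnd ℂ)) *ᵥ xc)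
      = star u ⬝ᵥ ((M - Mc) *ᵥ u) := by
    conv_lhs => rw [← hWu]
    rw [Matrix.star_mulVec, ← dotProduct_mulVec, Matrix.mulVec_mulVec, Matrix.mulVec_mulVec,
      KI3]
  rw [hMc, sub_conj_mat M, sub_conj_mat N, smul_mulVec, dotProduct_smul, smul_eq_mul,
    smul_mulVec, dotProduct_smul, smul_eq_mul] at key
  have h2I : (2 : ℂ) * Complex.I ≠ 0 := by simp [Complex.I_ne_zero]
  have hcancel : star xc ⬝ᵥ ((N.map Complex.im).map Complex.ofReal *ᵥ xc)
      = star u ⬝ᵥ ((M.map Complex.im).map Complex.ofReal *ᵥ u) :=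
    mul_left_cancel₀ h2I key
  have hq := quad_neg (M.map Complex.im) hneg u hu0
  rw [hstarxc, cast_quad] at hcancel
  have hre : x ⬝ᵥ ((N.map Complex.im) *ᵥ x)
      = (star u ⬝ᵥ ((M.map Complex.im).map Complex.ofReal *ᵥ u)).re := by
    rw [← hcancel, Complex.ofReal_re]
  rw [hre]
  exact hq
end

section
/- If N is a symmetric complex m×m matrix with Im N negative definite, and S = [[A,B],[C,D]] ∈ Sp(2m,ℝ), then A + BN is invertible, and Ñ = (C + DN)(A + BN)^{-1} is again symmetric with negative definite imaginary part. -/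
/-!
Put `P = A + BN` and `Q = C + DN`. The symplectic relations give `QᵀP = PᵀQ` and
`PᴴQ - QᴴP = N - Nᴴ = 2i • Im N`. The first makes `QP⁻¹` symmetric. The second gives
`Im ⟪Py, Qy⟫ = ⟪y, (Im N) y⟫ < 0` for every `y ≠ 0`: hence `P` has trivial kernel,
and for real `x ≠ 0` the choice `y = P⁻¹x` yields `xᵀ (Im QP⁻¹) x < 0`.
-/

open Matrix Complex

section SymplecticBlocks

variable {n R S : Type*} [Fintype n] [DecidableEq n] [CommRing R] [CommRing S]

/-- Taking `X = Nᴴ` and `X = N` gives the two identities of the proof. -/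
theorem symplectic_blocks_cross_identity (f : R →+* S) {A B C D : Matrix n n R}
    (h1 : Aᵀ * C = Cᵀ * A) (h2 : Bᵀ * D = Dᵀ * B) (h3 : Aᵀ * D - Cᵀ * B = 1)
    (X N : Matrix n n S) :
    ((C.map f)ᵀ + X * (D.map f)ᵀ) * (A.map f + B.map f * N)
      - ((A.map f)ᵀ + X * (B.map f)ᵀ) * (C.map f + D.map f * N) = X - N := by
  have h3' : Dᵀ * A - Bᵀ * C = 1 := by
    simpa [transpose_sub, transpose_mul] using congrArg transpose h3
  have e1 := congrArg f.mapMatrix h1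
  have e2 := congrArg f.mapMatrix h2
  have e3 := congrArg f.mapMatrix h3
  have e3' := congrArg f.mapMatrix h3'
  simp only [map_mul, map_sub, map_one] at e1 e2 e3 e3'
  simp only [RingHom.mapMatrix_apply, transpose_map] at e1 e2 e3 e3'
  linear_combination (norm := noncomm_ring) (-e1) + X * e3' - e3 * N - X * e2 * N

theorem symplectic_blocks_transpose_mul_comm (f : R →+* S) {A B C D : Matrix n n R}
    (h1 : Aᵀ * C = Cᵀ * A) (h2 : Bᵀ * D = Dᵀ * B) (h3 : Aᵀ * D - Cᵀ * B = 1)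
    {N : Matrix n n S} (hN : Nᵀ = N) :
    (C.map f + D.map f * N)ᵀ * (A.map f + B.map f * N)
      = (A.map f + B.map f * N)ᵀ * (C.map f + D.map f * N) := by
  rw [transpose_add, transpose_mul, transpose_add, transpose_mul, hN, ← sub_eq_zero]
  exact (symplectic_blocks_cross_identity f h1 h2 h3 N N).trans (sub_self N)

end SymplecticBlocks

theorem isSymm_mul_nonsing_inv_of_transpose_mul_comm {n R : Type*} [Fintype n] [DecidableEq n]
    [CommRing R] {P Q : Matrix n n R} (hP : IsUnit P.det) (h : Qᵀ * P = Pᵀ * Q) :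
    (Q * P⁻¹).IsSymm := by
  have hPT : IsUnit Pᵀ.det := by rwa [det_transpose]
  rw [IsSymm, transpose_mul, transpose_nonsing_inv,
    ← nonsing_inv_mul_cancel_left Pᵀ (Q * P⁻¹) hPT, ← Matrix.mul_assoc Pᵀ, ← h, Matrix.mul_assoc,
    mul_nonsing_inv _ hP, Matrix.mul_one]

section Complexification

variable {n : Type*}

theorem conjTranspose_map_ofReal (A : Matrix n n ℝ) : (A.map ofReal)ᴴ = (A.map ofReal)ᵀ := by
  ext i j; simp

theorem sub_conjTranspose_eq_of_transpose_eq {N : Matrix n n ℂ} (hN : Nᵀ = N) :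
    N - Nᴴ = (2 * I) • (N.map im).map ofReal := by
  ext i j
  have hji : N j i = N i j := congrFun (congrFun hN i) j
  rw [Matrix.sub_apply, conjTranspose_apply, hji, star_def, sub_conj]
  simp only [Matrix.smul_apply, map_apply, smul_eq_mul]
  push_cast
  ring

variable [Fintype n]

theorem re_star_dotProduct_map_ofReal_mulVec (M : Matrix n n ℝ) (y : n → ℂ) :
    (star y ⬝ᵥ (M.map ofReal *ᵥ y)).re
      = (re ∘ y) ⬝ᵥ (M *ᵥ (re ∘ y)) + (im ∘ y) ⬝ᵥ (M *ᵥ (im ∘ y)) := by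
  simp only [dotProduct, mulVec, map_apply, Pi.star_apply, Finset.mul_sum, re_sum,
    Function.comp_apply, ← Finset.sum_add_distrib]
  refine Finset.sum_congr rfl fun i _ => Finset.sum_congr rfl fun j _ => ?_
  simp only [mul_re, mul_im, star_def, conj_re, conj_im, ofReal_re, ofReal_im]
  ring

theorem re_star_dotProduct_map_ofReal_mulVec_lt_zero {M : Matrix n n ℝ}
    (hM : ∀ x : n → ℝ, x ≠ 0 → x ⬝ᵥ (M *ᵥ x) < 0) {y : n → ℂ} (hy : y ≠ 0) :
    (star y ⬝ᵥ (M.map ofReal *ᵥ y)).re < 0 := by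
  have hle : ∀ x : n → ℝ, x ⬝ᵥ (M *ᵥ x) ≤ 0 := fun x => by
    rcases eq_or_ne x 0 with rfl | hx
    · simp
    · exact (hM x hx).le
  have hre_or_im : re ∘ y ≠ 0 ∨ im ∘ y ≠ 0 := by
    by_contra! h
    exact hy (funext fun i => Complex.ext (congrFun h.1 i) (congrFun h.2 i))
  rw [re_star_dotProduct_map_ofReal_mulVec]
  rcases hre_or_im with h | h
  · linarith [hM _ h, hle (im ∘ y)]
  · linarith [hM _ h, hle (re ∘ y)]

theorem dotProduct_map_im_mulVec (K : Matrix n n ℂ) (x : n → ℝ) :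
    x ⬝ᵥ (K.map im *ᵥ x) = ((ofReal ∘ x) ⬝ᵥ (K *ᵥ (ofReal ∘ x))).im := by
  simp only [dotProduct, mulVec, map_apply, im_sum, Finset.mul_sum, Function.comp_apply]
  refine Finset.sum_congr rfl fun i _ => Finset.sum_congr rfl fun j _ => ?_
  simp only [mul_im, ofReal_re, ofReal_im]
  ring

theorem im_star_mulVec_dotProduct_mulVec {P Q M : Matrix n n ℂ}
    (h : Pᴴ * Q - Qᴴ * P = (2 * I) • M) (y : n → ℂ) :
    (star (P *ᵥ y) ⬝ᵥ (Q *ᵥ y)).im = (star y ⬝ᵥ (M *ᵥ y)).re := by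
  have hform (U V : Matrix n n ℂ) :
      star (U *ᵥ y) ⬝ᵥ (V *ᵥ y) = star y ⬝ᵥ ((Uᴴ * V) *ᵥ y) := by
    rw [star_mulVec, ← dotProduct_mulVec, mulVec_mulVec]
  have hs : star (P *ᵥ y) ⬝ᵥ (Q *ᵥ y) - star (star (P *ᵥ y) ⬝ᵥ (Q *ᵥ y))
      = 2 * I * (star y ⬝ᵥ (M *ᵥ y)) := by
    rw [← smul_eq_mul, ← dotProduct_smul, ← smul_mulVec, ← h, sub_mulVec, dotProduct_sub,
      ← hform, ← hform, ← star_dotProduct]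
  rw [star_def, sub_conj] at hs
  simpa using congrArg im hs

variable [DecidableEq n]

theorem isUnit_det_of_im_star_mulVec_dotProduct_mulVec_lt_zero {P Q : Matrix n n ℂ}
    (h : ∀ y : n → ℂ, y ≠ 0 → (star (P *ᵥ y) ⬝ᵥ (Q *ᵥ y)).im < 0) :
    IsUnit P.det := by
  rw [isUnit_iff_ne_zero, Ne, ← exists_mulVec_eq_zero_iff]
  rintro ⟨v, hv, hPv⟩
  simpa [hPv] using h v hv

theorem dotProduct_map_im_mul_nonsing_inv_mulVec_lt_zero {P Q : Matrix n n ℂ}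
    (hP : IsUnit P.det) (h : ∀ y : n → ℂ, y ≠ 0 → (star (P *ᵥ y) ⬝ᵥ (Q *ᵥ y)).im < 0)
    {x : n → ℝ} (hx : x ≠ 0) :
    x ⬝ᵥ ((Q * P⁻¹).map im *ᵥ x) < 0 := by
  set y := P⁻¹ *ᵥ (ofReal ∘ x)
  have hPy : P *ᵥ y = ofReal ∘ x := by simp [y, mulVec_mulVec, mul_nonsing_inv _ hP]
  have hy : y ≠ 0 := by
    rintro hy
    rw [hy, mulVec_zero] at hPy
    exact hx (funext fun i => by simpa using congrFun hPy.symm i)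
  have hstar : star (ofReal ∘ x) = ofReal ∘ x := by ext; simp
  have hlt := h y hy
  rw [hPy, hstar] at hlt
  rwa [dotProduct_map_im_mulVec, ← mulVec_mulVec]

theorem symplectic_blocks_conjTranspose_cross {A B C D : Matrix n n ℝ}
    (h1 : Aᵀ * C = Cᵀ * A) (h2 : Bᵀ * D = Dᵀ * B) (h3 : Aᵀ * D - Cᵀ * B = 1)
    (N : Matrix n n ℂ) :
    (A.map ofReal + B.map ofReal * N)ᴴ * (C.map ofReal + D.map ofReal * N)
      - (C.map ofReal + D.map ofReal * N)ᴴ * (A.map ofReal + B.map ofReal * N) = N - Nᴴ := by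
  simp only [conjTranspose_add, conjTranspose_mul, conjTranspose_map_ofReal]
  rw [← neg_sub, neg_eq_iff_eq_neg, neg_sub]
  exact symplectic_blocks_cross_identity ofRealHom h1 h2 h3 Nᴴ N

end Complexification

/-- If `N` is symmetric with negative definite imaginary part and `S = [[A,B],[C,D]]` is
real symplectic, then `A + BN` is invertible and `Ñ = (C+DN)(A+BN)⁻¹` is again symmetric
with negative definite imaginary part. -/
theorem stmt6 {m : ℕ} (N : Matrix (Fin m) (Fin m) ℂ) (hsym : Nᵀ = N)
    (hneg : ∀ x : Fin m → ℝ, x ≠ 0 → x ⬝ᵥ ((N.map Complex.im) *ᵥ x) < 0)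
    (A B C D : Matrix (Fin m) (Fin m) ℝ)
    (h1 : Aᵀ * C = Cᵀ * A) (h2 : Bᵀ * D = Dᵀ * B) (h3 : Aᵀ * D - Cᵀ * B = 1) :
    IsUnit (A.map Complex.ofReal + B.map Complex.ofReal * N).det ∧
    ((C.map Complex.ofReal + D.map Complex.ofReal * N) *
        (A.map Complex.ofReal + B.map Complex.ofReal * N)⁻¹)ᵀ
      = (C.map Complex.ofReal + D.map Complex.ofReal * N) *
        (A.map Complex.ofReal + B.map Complex.ofReal * N)⁻¹ ∧
    ∀ x : Fin m → ℝ, x ≠ 0 →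
      x ⬝ᵥ ((((C.map Complex.ofReal + D.map Complex.ofReal * N) *
        (A.map Complex.ofReal + B.map Complex.ofReal * N)⁻¹).map Complex.im) *ᵥ x) < 0 := by
  set P := A.map ofReal + B.map ofReal * N
  set Q := C.map ofReal + D.map ofReal * N
  have hPQ : Pᴴ * Q - Qᴴ * P = (2 * I) • (N.map im).map ofReal :=
    (symplectic_blocks_conjTranspose_cross h1 h2 h3 N).trans
      (sub_conjTranspose_eq_of_transpose_eq hsym)
  have hform (y : Fin m → ℂ) (hy : y ≠ 0) : (star (P *ᵥ y) ⬝ᵥ (Q *ᵥ y)).im < 0 :=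
    (im_star_mulVec_dotProduct_mulVec hPQ y).trans_lt
      (re_star_dotProduct_map_ofReal_mulVec_lt_zero hneg hy)
  have hP : IsUnit P.det := isUnit_det_of_im_star_mulVec_dotProduct_mulVec_lt_zero hform
  exact ⟨hP, (isSymm_mul_nonsing_inv_of_transpose_mul_comm hP
    (symplectic_blocks_transpose_mul_comm ofRealHom h1 h2 h3 hsym)).eq,
    fun x hx => dotProduct_map_im_mul_nonsing_inv_mulVec_lt_zero hP hform hx⟩
end

section
/- Every symplectic matrix in Sp(2m,ℝ) can be written as a finite product of matrices of the two forms L = [[A,0],[C,A^{-T}]] (with A invertible and A^T C symmetric) and J = [[0,I],[-I,0]]. -/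
open Matrix

lemma dot_mulVec_helper {m : ℕ} (A B : Matrix (Fin m) (Fin m) ℝ) (u w : Fin m → ℝ) :
    (A.mulVec u) ⬝ᵥ (B.mulVec w) = u ⬝ᵥ ((Aᵀ * B).mulVec w) := by
  rw [dotProduct_mulVec, dotProduct_mulVec, ← vecMul_vecMul, vecMul_transpose]

lemma exists_t_invertible {m : ℕ} (P Q : Matrix (Fin m) (Fin m) ℝ)
    (hsym : Pᵀ * Q = Qᵀ * P)
    (hker : ∀ v : Fin m → ℝ, P.mulVec v = 0 → Q.mulVec v = 0 → v = 0) :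
    ∃ t : ℝ, IsUnit (P + t • Q).det := by
  by_contra h
  push_neg at h
  have hv : ∀ i : Fin (m + 1), ∃ v : Fin m → ℝ, v ≠ 0 ∧ (P + (i : ℝ) • Q).mulVec v = 0 := by
    intro i
    have hd : (P + (i : ℝ) • Q).det = 0 := by
      by_contra hd
      exact h _ (isUnit_iff_ne_zero.2 hd)
    obtain ⟨v, hv0, hv⟩ := (Matrix.exists_mulVec_eq_zero_iff).2 hd
    exact ⟨v, hv0, hv⟩
  choose v hv0 hveq using hv
  set x : Fin (m + 1) → (Fin m → ℝ) := fun i => Q.mulVec (v i) with hx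
  have hPv : ∀ i, P.mulVec (v i) = -((i : ℝ) • x i) := by
    intro i
    have := hveq i
    rw [add_mulVec, smul_mulVec] at this
    rw [eq_neg_iff_add_eq_zero]
    exact this
  have hxne : ∀ i, x i ≠ 0 := by
    intro i hx0
    apply hv0 i
    apply hker (v i)
    · rw [hPv i, hx0, smul_zero, neg_zero]
    · exact hx0
  have horth : ∀ i j, i ≠ j → x i ⬝ᵥ x j = 0 := by
    intro i j hij
    have key : (P.mulVec (v i)) ⬝ᵥ (Q.mulVec (v j)) = (Q.mulVec (v i)) ⬝ᵥ (P.mulVec (v j)) := by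
      rw [dot_mulVec_helper, dot_mulVec_helper, hsym]
    have hxj : ∀ k, Q.mulVec (v k) = x k := fun _ => rfl
    rw [hPv i, hPv j, hxj, hxj] at key
    simp only [neg_dotProduct, dotProduct_neg, smul_dotProduct, dotProduct_smul,
      smul_eq_mul] at key
    have hcast : (i : ℝ) ≠ (j : ℝ) := by
      simp only [ne_eq, Nat.cast_inj]
      exact fun hc => hij (Fin.ext hc)
    have : ((i : ℝ) - (j : ℝ)) * (x i ⬝ᵥ x j) = 0 := by ring_nf; linarith [key]
    rcases mul_eq_zero.1 this with h' | h'
    · exact absurd (sub_eq_zero.1 h') hcast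
    · exact h'
  have hli : LinearIndependent ℝ x := by
    rw [Fintype.linearIndependent_iff]
    intro g hg i
    have hdot : (∑ j, g j • x j) ⬝ᵥ x i = 0 := by rw [hg]; simp
    have expand : (∑ j, g j • x j) ⬝ᵥ x i = ∑ j, g j * (x j ⬝ᵥ x i) := by
      simp only [dotProduct, Finset.sum_apply, Pi.smul_apply, smul_eq_mul, Finset.sum_mul,
        Finset.mul_sum]
      rw [Finset.sum_comm]
      simp [mul_assoc]
    rw [expand] at hdot
    rw [Finset.sum_eq_single i] at hdot
    · rcases mul_eq_zero.1 hdot with h' | h'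
      · exact h'
      · exact absurd (dotProduct_self_eq_zero.1 h') (hxne i)
    · intro j _ hj
      rw [horth j i hj, mul_zero]
    · intro hi; exact absurd (Finset.mem_univ i) hi
  have hcard := hli.fintype_card_le_finrank
  simp only [Fintype.card_fin, Module.finrank_fin_fun] at hcard
  omega

lemma flip_symplectic {n : Type*} [Fintype n] [DecidableEq n]
    (Sm O OT : Matrix n n ℝ) (h : Smᵀ * O * Sm = O) (hO : O * OT = 1) (hOT : OT = -O) :
    Sm * O * Smᵀ = O := by
  have h1' : Smᵀ * O * Sm * OT = 1 := by rw [h, hO]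
  have h2' : (O * (Sm * OT)) * Smᵀ = 1 := by
    rw [← mul_eq_one_comm]
    calc Smᵀ * (O * (Sm * OT)) = Smᵀ * O * Sm * OT := by simp only [Matrix.mul_assoc]
    _ = 1 := h1'
  have hOTO : OT * O = 1 := mul_eq_one_comm.1 hO
  have h3' : Sm * OT * Smᵀ = OT := by
    calc Sm * OT * Smᵀ = (OT * O) * (Sm * OT * Smᵀ) := by rw [hOTO, Matrix.one_mul]
    _ = OT * ((O * (Sm * OT)) * Smᵀ) := by simp only [Matrix.mul_assoc]
    _ = OT := by rw [h2', Matrix.mul_one]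
  rw [hOT, mul_neg, neg_mul] at h3'
  exact neg_injective h3'

/-- Every real symplectic matrix is a finite product of matrices of the form
`L = [[A,0],[C,A⁻ᵀ]]` (with `A` invertible and `AᵀC` symmetric) and `J = [[0,1],[-1,0]]`. -/
theorem stmt8 {m : ℕ} (S : Matrix (Fin m ⊕ Fin m) (Fin m ⊕ Fin m) ℝ)
    (hS : Sᵀ * fromBlocks 0 1 (-1) 0 * S = fromBlocks 0 1 (-1) 0) :
    ∃ l : List (Matrix (Fin m ⊕ Fin m) (Fin m ⊕ Fin m) ℝ),
      (∀ M ∈ l,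
        (∃ A C : Matrix (Fin m) (Fin m) ℝ, IsUnit A.det ∧ (Aᵀ * C)ᵀ = Aᵀ * C ∧
          M = fromBlocks A 0 C (A⁻¹)ᵀ) ∨
        M = fromBlocks 0 1 (-1) 0) ∧
      l.prod = S := by
  obtain ⟨A, B, C, D, rfl⟩ : ∃ A B C D, S = fromBlocks A B C D :=
    ⟨S.toBlocks₁₁, S.toBlocks₁₂, S.toBlocks₂₁, S.toBlocks₂₂, (fromBlocks_toBlocks S).symm⟩
  -- the reversed symplectic relation
  have hOOT : (fromBlocks 0 1 (-1) 0 : Matrix (Fin m ⊕ Fin m) (Fin m ⊕ Fin m) ℝ) *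
      (fromBlocks 0 (-1) 1 0) = 1 := by
    rw [fromBlocks_multiply, ← fromBlocks_one]
    congr 1 <;> simp
  have hOT : (fromBlocks 0 (-1) 1 0 : Matrix (Fin m ⊕ Fin m) (Fin m ⊕ Fin m) ℝ) =
      -(fromBlocks 0 1 (-1) 0) := by
    ext (i | i) (j | j) <;> simp [fromBlocks]
  have hrev := flip_symplectic (fromBlocks A B C D) (fromBlocks 0 1 (-1) 0)
    (fromBlocks 0 (-1) 1 0) hS hOOT hOT
  -- invertibility of S
  have hSdet : IsUnit (fromBlocks A B C D).det := by
    apply Matrix.isUnit_det_of_right_inverse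
      (B := (fromBlocks 0 1 (-1) 0) * ((fromBlocks A B C D)ᵀ * (fromBlocks 0 (-1) 1 0)))
    calc fromBlocks A B C D *
        ((fromBlocks 0 1 (-1) 0) * ((fromBlocks A B C D)ᵀ * (fromBlocks 0 (-1) 1 0)))
        = (fromBlocks A B C D * (fromBlocks 0 1 (-1) 0) * (fromBlocks A B C D)ᵀ) *
          (fromBlocks 0 (-1) 1 0) := by simp only [Matrix.mul_assoc]
      _ = 1 := by rw [hrev, hOOT]
  -- block relations from hS
  rw [fromBlocks_transpose, fromBlocks_multiply, fromBlocks_multiply] at hS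
  simp only [Matrix.mul_zero, Matrix.mul_one, Matrix.mul_neg, Matrix.neg_mul, Matrix.zero_mul,
    Matrix.one_mul, zero_add, add_zero] at hS
  have h11 := congrArg Matrix.toBlocks₁₁ hS
  have h12 := congrArg Matrix.toBlocks₁₂ hS
  simp only [toBlocks_fromBlocks₁₁, toBlocks_fromBlocks₁₂] at h11 h12
  have h1 : Aᵀ * C = Cᵀ * A := (neg_add_eq_zero.1 h11).symm
  have h2 : Aᵀ * D = 1 + Cᵀ * B := by rw [← h12]; abel
  -- block relations from hrev
  rw [fromBlocks_transpose, fromBlocks_multiply, fromBlocks_multiply] at hrev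
  simp only [Matrix.mul_zero, Matrix.mul_one, Matrix.mul_neg, Matrix.neg_mul, Matrix.zero_mul,
    Matrix.one_mul, zero_add, add_zero] at hrev
  have g11 := congrArg Matrix.toBlocks₁₁ hrev
  have g12 := congrArg Matrix.toBlocks₁₂ hrev
  have g22 := congrArg Matrix.toBlocks₂₂ hrev
  simp only [toBlocks_fromBlocks₁₁, toBlocks_fromBlocks₁₂, toBlocks_fromBlocks₂₂]
    at g11 g12 g22
  have h4 : A * Bᵀ = B * Aᵀ := (neg_add_eq_zero.1 g11).symm
  have h5 : A * Dᵀ = 1 + B * Cᵀ := by rw [← g12]; abel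
  have h6 : C * Dᵀ = D * Cᵀ := (neg_add_eq_zero.1 g22).symm
  have h5' : D * Aᵀ = 1 + C * Bᵀ := by
    have := congrArg Matrix.transpose h5
    simpa [Matrix.transpose_mul, Matrix.transpose_add, Matrix.transpose_one] using this
  -- find t with A + t • C invertible
  have hker : ∀ v : Fin m → ℝ, A.mulVec v = 0 → C.mulVec v = 0 → v = 0 := by
    intro v hA hC
    have hinj : Function.Injective (fromBlocks A B C D).mulVec :=
      Matrix.mulVec_injective_iff_isUnit.2 ((Matrix.isUnit_iff_isUnit_det _).2 hSdet)
    have hw : (fromBlocks A B C D).mulVec (Sum.elim v 0) = (fromBlocks A B C D).mulVec 0 := by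
      rw [fromBlocks_mulVec, Matrix.mulVec_zero]
      funext j
      cases j with
      | inl j => simp [hA]
      | inr j => simp [hC]
    have := hinj hw
    funext i
    exact congrFun this (Sum.inl i)
  obtain ⟨t, hE⟩ := exists_t_invertible A C h1 hker
  set E : Matrix (Fin m) (Fin m) ℝ := A + t • C with hEdef
  set B2 : Matrix (Fin m) (Fin m) ℝ := B + t • D with hB2def
  set X : Matrix (Fin m) (Fin m) ℝ := E⁻¹ * B2 with hXdef
  have hEinv : E * E⁻¹ = 1 := Matrix.mul_nonsing_inv E hE
  have hEinv' : E⁻¹ * E = 1 := Matrix.nonsing_inv_mul E hE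
  have hET : IsUnit Eᵀ.det := by rw [Matrix.det_transpose]; exact hE
  have hETinv : Eᵀ * Eᵀ⁻¹ = 1 := Matrix.mul_nonsing_inv Eᵀ hET
  have hETinv' : Eᵀ⁻¹ * Eᵀ = 1 := Matrix.nonsing_inv_mul Eᵀ hET
  have f1 : Eᵀ * C = Cᵀ * E := by
    rw [hEdef, transpose_add, transpose_smul, add_mul, mul_add, Matrix.smul_mul,
      Matrix.mul_smul, h1]
  have f2 : Eᵀ * D = 1 + Cᵀ * B2 := by
    rw [hEdef, hB2def, transpose_add, transpose_smul, add_mul, Matrix.smul_mul, h2, mul_add,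
      Matrix.mul_smul]
    abel
  have f3 : E * B2ᵀ = B2 * Eᵀ := by
    rw [hEdef, hB2def, transpose_add, transpose_smul, transpose_add, transpose_smul]
    simp only [add_mul, mul_add, Matrix.smul_mul, Matrix.mul_smul, smul_add, smul_smul]
    rw [h4, h6, h5, h5']
    simp only [smul_add]
    abel
  have f4 : Xᵀ = X := by
    have hXalt : B2ᵀ * Eᵀ⁻¹ = E⁻¹ * B2 := by
      calc B2ᵀ * Eᵀ⁻¹ = (E⁻¹ * E) * (B2ᵀ * Eᵀ⁻¹) := by rw [hEinv', Matrix.one_mul]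
      _ = E⁻¹ * ((E * B2ᵀ) * Eᵀ⁻¹) := by simp only [Matrix.mul_assoc]
      _ = E⁻¹ * (B2 * (Eᵀ * Eᵀ⁻¹)) := by rw [f3]; simp only [Matrix.mul_assoc]
      _ = E⁻¹ * B2 := by rw [hETinv, Matrix.mul_one]
    rw [hXdef, transpose_mul, transpose_nonsing_inv, hXalt]
  have f5 : E * X = B2 := by
    rw [hXdef, ← Matrix.mul_assoc, hEinv, Matrix.one_mul]
  have f6 : C * X + (E⁻¹)ᵀ = D := by
    have hCE : C * E⁻¹ = Eᵀ⁻¹ * Cᵀ := by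
      calc C * E⁻¹ = (Eᵀ⁻¹ * Eᵀ) * (C * E⁻¹) := by rw [hETinv', Matrix.one_mul]
      _ = Eᵀ⁻¹ * ((Eᵀ * C) * E⁻¹) := by simp only [Matrix.mul_assoc]
      _ = Eᵀ⁻¹ * (Cᵀ * (E * E⁻¹)) := by rw [f1]; simp only [Matrix.mul_assoc]
      _ = Eᵀ⁻¹ * Cᵀ := by rw [hEinv, Matrix.mul_one]
    have hD : D = Eᵀ⁻¹ + Eᵀ⁻¹ * (Cᵀ * B2) := by
      calc D = (Eᵀ⁻¹ * Eᵀ) * D := by rw [hETinv', Matrix.one_mul]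
      _ = Eᵀ⁻¹ * (Eᵀ * D) := by rw [Matrix.mul_assoc]
      _ = Eᵀ⁻¹ * (1 + Cᵀ * B2) := by rw [f2]
      _ = Eᵀ⁻¹ + Eᵀ⁻¹ * (Cᵀ * B2) := by rw [mul_add, Matrix.mul_one]
    calc C * X + (E⁻¹)ᵀ = C * (E⁻¹ * B2) + Eᵀ⁻¹ := by rw [hXdef, transpose_nonsing_inv]
    _ = (C * E⁻¹) * B2 + Eᵀ⁻¹ := by rw [Matrix.mul_assoc]
    _ = Eᵀ⁻¹ * (Cᵀ * B2) + Eᵀ⁻¹ := by rw [hCE, Matrix.mul_assoc]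
    _ = D := by rw [hD]; abel
  -- the factorization
  refine ⟨[fromBlocks (-1) 0 0 (-1), fromBlocks 0 1 (-1) 0, fromBlocks 1 0 (t • 1) 1,
    fromBlocks 0 1 (-1) 0, fromBlocks E 0 C (E⁻¹)ᵀ, fromBlocks (-1) 0 0 (-1),
    fromBlocks 0 1 (-1) 0, fromBlocks 1 0 (-X) 1, fromBlocks 0 1 (-1) 0], ?_, ?_⟩
  · have hneg1 : ((-1 : Matrix (Fin m) (Fin m) ℝ)⁻¹)ᵀ = -1 := by
      rw [Matrix.inv_eq_right_inv (by rw [neg_one_mul, neg_neg]), transpose_neg, transpose_one]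
    have hnegdet : IsUnit (-1 : Matrix (Fin m) (Fin m) ℝ).det :=
      Matrix.isUnit_det_of_right_inverse (B := -1) (by rw [neg_one_mul, neg_neg])
    have hone : (((1 : Matrix (Fin m) (Fin m) ℝ))⁻¹)ᵀ = 1 := by rw [inv_one, transpose_one]
    intro M hM
    simp only [List.mem_cons, List.not_mem_nil, or_false] at hM
    rcases hM with rfl | rfl | rfl | rfl | rfl | rfl | rfl | rfl | rfl
    · exact Or.inl ⟨-1, 0, hnegdet, by simp, by rw [hneg1]⟩
    · exact Or.inr rfl
    · exact Or.inl ⟨1, t • 1, by simp, by simp [transpose_smul], by rw [hone]⟩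
    · exact Or.inr rfl
    · exact Or.inl ⟨E, C, hE, by rw [transpose_mul, transpose_transpose, f1], rfl⟩
    · exact Or.inl ⟨-1, 0, hnegdet, by simp, by rw [hneg1]⟩
    · exact Or.inr rfl
    · exact Or.inl ⟨1, -X, by simp, by simp [transpose_neg, f4], by rw [hone]⟩
    · exact Or.inr rfl
  · have hU : ∀ Y : Matrix (Fin m) (Fin m) ℝ,
        (fromBlocks (-1) 0 0 (-1) : Matrix (Fin m ⊕ Fin m) (Fin m ⊕ Fin m) ℝ) *
          ((fromBlocks 0 1 (-1) 0) * ((fromBlocks 1 0 Y 1) * (fromBlocks 0 1 (-1) 0))) =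
        fromBlocks 1 (-Y) 0 1 := by
      intro Y
      rw [fromBlocks_multiply, fromBlocks_multiply, fromBlocks_multiply]
      congr 1 <;> simp
    have hU' : ∀ (Y : Matrix (Fin m) (Fin m) ℝ)
        (Z : Matrix (Fin m ⊕ Fin m) (Fin m ⊕ Fin m) ℝ),
        (fromBlocks (-1) 0 0 (-1) : Matrix (Fin m ⊕ Fin m) (Fin m ⊕ Fin m) ℝ) *
          ((fromBlocks 0 1 (-1) 0) * ((fromBlocks 1 0 Y 1) * ((fromBlocks 0 1 (-1) 0) * Z))) =
        fromBlocks 1 (-Y) 0 1 * Z := by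
      intro Y Z
      calc (fromBlocks (-1) 0 0 (-1) : Matrix (Fin m ⊕ Fin m) (Fin m ⊕ Fin m) ℝ) *
          ((fromBlocks 0 1 (-1) 0) * ((fromBlocks 1 0 Y 1) * ((fromBlocks 0 1 (-1) 0) * Z)))
          = ((fromBlocks (-1) 0 0 (-1)) *
            ((fromBlocks 0 1 (-1) 0) * ((fromBlocks 1 0 Y 1) * (fromBlocks 0 1 (-1) 0)))) * Z := by
            simp only [Matrix.mul_assoc]
        _ = fromBlocks 1 (-Y) 0 1 * Z := by rw [hU]
    simp only [List.prod_cons, List.prod_nil, Matrix.mul_one]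
    rw [hU (-X), neg_neg]
    rw [hU' (t • 1)]
    have hL1U : (fromBlocks E 0 C (E⁻¹)ᵀ : Matrix (Fin m ⊕ Fin m) (Fin m ⊕ Fin m) ℝ) *
        fromBlocks 1 X 0 1 = fromBlocks E B2 C D := by
      rw [fromBlocks_multiply]
      congr 1 <;> simp [f5, f6]
    rw [hL1U, fromBlocks_multiply]
    congr 1 <;> simp [hEdef, hB2def, Matrix.smul_mul] <;> abel
end

section
/- If S = [[A,B],[C,D]] ∈ Sp(2m,ℝ) and A is invertible, then S = [[A,0],[C,A^{-T}]] · [[0,I],[-I,0]] · [[-I,0],[A^{-1}B,-I]] · [[0,I],[-I,0]]. -/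
open Matrix

/-- Decomposition of a symplectic matrix with invertible `A` block:
`S = [[A,0],[C,A⁻ᵀ]] · J · [[-1,0],[A⁻¹B,-1]] · J` with `J = [[0,1],[-1,0]]`. -/
theorem stmt9 {m : ℕ} (A B C D : Matrix (Fin m) (Fin m) ℝ)
    (h1 : Aᵀ * C = Cᵀ * A) (h2 : Bᵀ * D = Dᵀ * B) (h3 : Aᵀ * D - Cᵀ * B = 1)
    (hA : IsUnit A.det) :
    fromBlocks A B C D
      = fromBlocks A 0 C (A⁻¹)ᵀ * fromBlocks 0 1 (-1) 0 *
        fromBlocks (-1) 0 (A⁻¹ * B) (-1) * fromBlocks 0 1 (-1) 0 := by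
  have hAi : A * A⁻¹ = 1 := Matrix.mul_nonsing_inv A hA
  have hiA : A⁻¹ * A = 1 := Matrix.nonsing_inv_mul A hA
  have hD : D = (A⁻¹)ᵀ + C * A⁻¹ * B := by
    have h3' : Aᵀ * D = 1 + Cᵀ * B := by linear_combination (norm := noncomm_ring) h3
    have : (A⁻¹)ᵀ * (Aᵀ * D) = (A⁻¹)ᵀ * (1 + Cᵀ * B) := by rw [h3']
    have hAT : (A⁻¹)ᵀ * Aᵀ = 1 := by rw [← Matrix.transpose_mul, hAi, Matrix.transpose_one]
    have hCA : (A⁻¹)ᵀ * Cᵀ = C * A⁻¹ := by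
      have := congrArg (fun M => (A⁻¹)ᵀ * M * A⁻¹) h1
      calc (A⁻¹)ᵀ * Cᵀ = (A⁻¹)ᵀ * Cᵀ * (A * A⁻¹) := by rw [hAi, mul_one]
        _ = (A⁻¹)ᵀ * (Cᵀ * A) * A⁻¹ := by noncomm_ring
        _ = (A⁻¹)ᵀ * (Aᵀ * C) * A⁻¹ := by rw [h1]
        _ = ((A⁻¹)ᵀ * Aᵀ) * C * A⁻¹ := by noncomm_ring
        _ = C * A⁻¹ := by rw [hAT, one_mul]
    calc D = ((A⁻¹)ᵀ * Aᵀ) * D := by rw [hAT, one_mul]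
      _ = (A⁻¹)ᵀ * (Aᵀ * D) := by noncomm_ring
      _ = (A⁻¹)ᵀ * (1 + Cᵀ * B) := by rw [h3']
      _ = (A⁻¹)ᵀ + (A⁻¹)ᵀ * Cᵀ * B := by noncomm_ring
      _ = (A⁻¹)ᵀ + C * A⁻¹ * B := by rw [hCA]
  simp only [Matrix.fromBlocks_multiply]
  rw [hD]
  congr 1 <;> simp [Matrix.mul_assoc, hAi, hiA, ← Matrix.mul_assoc] <;> noncomm_ring
end

section
/- Let V = [[X],[Y]] be a 2m×m complex matrix of rank m (X, Y each m×m). Then there exists a symplectic matrix S ∈ Sp(2m,ℝ) such that the upper m×m block X̃ of SV is invertible. -/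
open Matrix

section aux

variable {m : ℕ}

private lemma vecMulVec_mulVec' (a b z : Fin m → ℂ) :
    (vecMulVec a b).mulVec z = (b ⬝ᵥ z) • a := by
  ext i
  simp only [mulVec, dotProduct, vecMulVec_apply, Pi.smul_apply, smul_eq_mul]
  rw [Finset.sum_mul]
  exact Finset.sum_congr rfl fun j _ => by ring

/-- Two proper subspaces cannot cover the whole space. -/
private lemma exists_not_mem_two {K V : Type*} [Field K] [AddCommGroup V] [Module K V]
    (W₁ W₂ : Submodule K V) (h₁ : W₁ ≠ ⊤) (h₂ : W₂ ≠ ⊤) :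
    ∃ v, v ∉ W₁ ∧ v ∉ W₂ := by
  obtain ⟨x, hx⟩ : ∃ x, x ∉ W₁ := by
    by_contra h; push_neg at h; exact h₁ (Submodule.eq_top_iff'.mpr h)
  obtain ⟨y, hy⟩ : ∃ y, y ∉ W₂ := by
    by_contra h; push_neg at h; exact h₂ (Submodule.eq_top_iff'.mpr h)
  by_cases hx2 : x ∉ W₂
  · exact ⟨x, hx, hx2⟩
  by_cases hy1 : y ∉ W₁
  · exact ⟨y, hy1, hy⟩
  push_neg at hx2 hy1
  refine ⟨x + y, fun h => hx ?_, fun h => hy ?_⟩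
  · have := W₁.sub_mem h hy1; simpa using this
  · have := W₂.sub_mem h hx2
    rwa [add_sub_cancel_left] at this

private lemma key (m : ℕ) : ∀ (k : ℕ) (X Y : Matrix (Fin m) (Fin m) ℂ),
    (∀ c, X.mulVec c = 0 → Y.mulVec c = 0 → c = 0) →
    Module.finrank ℂ (LinearMap.ker X.mulVecLin) ≤ k →
    ∃ B : Matrix (Fin m) (Fin m) ℝ, Bᵀ = B ∧
      IsUnit (X + B.map Complex.ofReal * Y).det := by
  intro k
  induction k with
  | zero =>
    intro X Y _ hk
    refine ⟨0, by simp, ?_⟩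
    have hker : LinearMap.ker X.mulVecLin = ⊥ :=
      Submodule.finrank_eq_zero.mp (Nat.le_zero.mp hk)
    have hinj : Function.Injective X.mulVec := by
      rw [← coe_mulVecLin]
      exact LinearMap.ker_eq_bot.mp hker
    have : IsUnit X := mulVec_injective_iff_isUnit.mp hinj
    have h0 : ((0 : Matrix (Fin m) (Fin m) ℝ).map Complex.ofReal) = 0 :=
      Matrix.map_zero _ Complex.ofReal_zero
    rw [h0, zero_mul, add_zero]
    exact (Matrix.isUnit_iff_isUnit_det X).mp this
  | succ k ih =>
    intro X Y hXY hk
    by_cases hbot : LinearMap.ker X.mulVecLin = ⊥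
    · exact ih X Y hXY (by rw [hbot]; simp)
    · obtain ⟨n, hn_mem, hn⟩ := Submodule.exists_mem_ne_zero_of_ne_bot hbot
      have hXn : X.mulVec n = 0 := hn_mem
      set w : Fin m → ℂ := Y.mulVec n with hw
      have hwne : w ≠ 0 := fun h => hn (hXY n hXn h)
      obtain ⟨i₀, hi₀⟩ : ∃ i, w i ≠ 0 := by
        by_contra h; push_neg at h; exact hwne (funext h)
      -- real-to-complex coercion as an ℝ-linear map
      let ψ : (Fin m → ℝ) →ₗ[ℝ] (Fin m → ℂ) :=
        { toFun := fun v i => (v i : ℂ)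
          map_add' := fun a b => by ext i; push_cast; simp
          map_smul' := fun r a => by
            ext i; push_cast; simp [Complex.real_smul] }
      let W₁ : Submodule ℝ (Fin m → ℝ) :=
        ((LinearMap.range X.mulVecLin).restrictScalars ℝ).comap ψ
      let φ : (Fin m → ℝ) →ₗ[ℝ] ℂ :=
        { toFun := fun v => (fun i => (v i : ℂ)) ⬝ᵥ w
          map_add' := fun a b => by
            simp only [dotProduct, ← Finset.sum_add_distrib]
            exact Finset.sum_congr rfl fun j _ => by
              simp only [Pi.add_apply]; push_cast; ring
          map_smul' := fun r a => by
            simp only [dotProduct, RingHom.id_apply, Complex.real_smul, Finset.mul_sum]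
            exact Finset.sum_congr rfl fun j _ => by
              simp only [Pi.smul_apply, smul_eq_mul]; push_cast; ring }
      let W₂ : Submodule ℝ (Fin m → ℝ) := LinearMap.ker φ
      have hW₁ : W₁ ≠ ⊤ := by
        intro htop
        apply hbot
        have hrange : LinearMap.range X.mulVecLin = ⊤ := by
          rw [eq_top_iff]
          have hb : ∀ i : Fin m, (Pi.single i 1 : Fin m → ℂ) ∈
              LinearMap.range X.mulVecLin := by
            intro i
            have hmem : (Pi.single i 1 : Fin m → ℝ) ∈ W₁ := htop ▸ Submodule.mem_top
            have hψ : ψ (Pi.single i 1) = (Pi.single i 1 : Fin m → ℂ) := by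
              ext j
              by_cases h : j = i <;> simp [ψ, Pi.single_apply, h]
            have := hmem
            rw [Submodule.mem_comap, hψ] at this
            exact this
          intro x _
          have hx : x = ∑ i, x i • (Pi.single i 1 : Fin m → ℂ) := by
            ext j; simp [Pi.single_apply]
          rw [hx]
          exact Submodule.sum_mem _ fun i _ => Submodule.smul_mem _ _ (hb i)
        have h1 := LinearMap.finrank_range_add_finrank_ker (X.mulVecLin)
        rw [hrange] at h1
        rw [← Submodule.finrank_eq_zero (R := ℂ)]
        simp only [finrank_top, Module.finrank_pi, Fintype.card_fin] at h1 ⊢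
        omega
      have hW₂ : W₂ ≠ ⊤ := by
        intro htop
        have hmem : (Pi.single i₀ 1 : Fin m → ℝ) ∈ W₂ := htop ▸ Submodule.mem_top
        have hφ : φ (Pi.single i₀ 1) = w i₀ := by
          simp only [φ, LinearMap.coe_mk, AddHom.coe_mk, dotProduct]
          rw [Finset.sum_eq_single i₀]
          · simp
          · intro j _ hj; simp [Pi.single_apply, hj]
          · simp
        rw [LinearMap.mem_ker, hφ] at hmem
        exact hi₀ hmem
      obtain ⟨v, hv₁, hv₂⟩ := exists_not_mem_two W₁ W₂ hW₁ hW₂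
      set u : Fin m → ℂ := fun i => (v i : ℂ) with hu
      have hu₁ : u ∉ LinearMap.range X.mulVecLin := hv₁
      have hu₂ : u ⬝ᵥ w ≠ 0 := hv₂
      have hune : u ≠ 0 := by
        intro h; apply hu₂; rw [h]; simp
      set X' : Matrix (Fin m) (Fin m) ℂ := X + vecMulVec u u * Y with hX'
      have hX'mulVec : ∀ c, X'.mulVec c = X.mulVec c + (u ⬝ᵥ Y.mulVec c) • u := by
        intro c
        rw [hX', add_mulVec, ← mulVec_mulVec, vecMulVec_mulVec']
      have hker_le : ∀ c, X'.mulVec c = 0 → X.mulVec c = 0 := by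
        intro c hc
        rw [hX'mulVec] at hc
        by_cases hs : u ⬝ᵥ Y.mulVec c = 0
        · rwa [hs, zero_smul, add_zero] at hc
        · exfalso
          apply hu₁
          have hXc : X.mulVec c = (-(u ⬝ᵥ Y.mulVec c)) • u := by
            rw [neg_smul, eq_neg_iff_add_eq_zero]; exact hc
          have huc : u = (-(u ⬝ᵥ Y.mulVec c))⁻¹ • X.mulVec c := by
            rw [hXc, smul_smul, inv_mul_cancel₀ (neg_ne_zero.mpr hs), one_smul]
          rw [huc]
          exact Submodule.smul_mem _ _ ⟨c, rfl⟩
      -- the kernel strictly decreases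
      have hlt : LinearMap.ker X'.mulVecLin < LinearMap.ker X.mulVecLin := by
        rw [SetLike.lt_iff_le_and_exists]
        constructor
        · intro c hc
          rw [LinearMap.mem_ker, mulVecLin_apply] at hc ⊢
          exact hker_le c hc
        · refine ⟨n, hn_mem, ?_⟩
          rw [LinearMap.mem_ker, mulVecLin_apply, hX'mulVec, hXn, zero_add, ← hw]
          exact smul_ne_zero hu₂ hune
      have hle : Module.finrank ℂ (LinearMap.ker X'.mulVecLin) ≤ k := by
        have := Submodule.finrank_lt_finrank_of_lt hlt
        omega
      have hXY' : ∀ c, X'.mulVec c = 0 → Y.mulVec c = 0 → c = 0 := by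
        intro c hc hYc
        apply hXY c _ hYc
        rw [hX'mulVec, hYc] at hc
        simpa using hc
      obtain ⟨B', hB's, hB'⟩ := ih X' Y hXY' hle
      have hmap : (vecMulVec v v).map Complex.ofReal = vecMulVec u u := by
        ext i j; simp [vecMulVec_apply, hu]
      refine ⟨vecMulVec v v + B', ?_, ?_⟩
      · rw [transpose_add, hB's]
        congr 1
        ext i j
        simp [vecMulVec_apply, mul_comm]
      · have heq : X + ((vecMulVec v v + B').map Complex.ofReal) * Y
            = X' + B'.map Complex.ofReal * Y := by
          rw [Matrix.map_add _ (fun a b => Complex.ofReal_add a b), hmap, add_mul, hX', add_assoc]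
        rw [heq]
        exact hB'

end aux

/-- If a `2m × m` complex matrix `V = [[X],[Y]]` has rank `m`, there is a real symplectic
`S` such that the upper `m × m` block of `SV` is invertible. -/
theorem stmt10 {m : ℕ} (V : Matrix (Fin m ⊕ Fin m) (Fin m) ℂ) (hV : V.rank = m) :
    ∃ S : Matrix (Fin m ⊕ Fin m) (Fin m ⊕ Fin m) ℝ,
      Sᵀ * fromBlocks 0 1 (-1) 0 * S = fromBlocks 0 1 (-1) 0 ∧
      IsUnit (Matrix.of fun i j : Fin m =>
        (S.map Complex.ofReal * V) (Sum.inl i) j).det := by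
  set X : Matrix (Fin m) (Fin m) ℂ := Matrix.of fun i j => V (Sum.inl i) j with hX
  set Y : Matrix (Fin m) (Fin m) ℂ := Matrix.of fun i j => V (Sum.inr i) j with hY
  -- V has trivial kernel
  have hVinj : ∀ c, V.mulVec c = 0 → c = 0 := by
    have h1 := LinearMap.finrank_range_add_finrank_ker (V.mulVecLin)
    have h2 : Module.finrank ℂ (LinearMap.range V.mulVecLin) = m := hV
    have h3 : Module.finrank ℂ (Fin m → ℂ) = m := by
      simp [Module.finrank_pi]
    rw [h2, h3] at h1
    have hker : LinearMap.ker V.mulVecLin = ⊥ :=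
      Submodule.finrank_eq_zero.mp (by omega)
    intro c hc
    have : c ∈ LinearMap.ker V.mulVecLin := by
      rw [LinearMap.mem_ker, mulVecLin_apply]; exact hc
    rwa [hker, Submodule.mem_bot] at this
  have hXY : ∀ c, X.mulVec c = 0 → Y.mulVec c = 0 → c = 0 := by
    intro c hXc hYc
    apply hVinj
    ext k
    rcases k with i | i
    · have := congrFun hXc i
      simpa [hX, mulVec, dotProduct] using this
    · have := congrFun hYc i
      simpa [hY, mulVec, dotProduct] using this
  obtain ⟨B, hBs, hB⟩ := key m (Module.finrank ℂ (LinearMap.ker X.mulVecLin)) X Y hXY le_rfl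
  refine ⟨fromBlocks 1 B 0 1, ?_, ?_⟩
  · rw [fromBlocks_transpose, fromBlocks_multiply, fromBlocks_multiply]
    simp [hBs]
  · have hSmap : (fromBlocks (1 : Matrix (Fin m) (Fin m) ℝ) B (0 : Matrix (Fin m) (Fin m) ℝ) (1 : Matrix (Fin m) (Fin m) ℝ)).map Complex.ofReal
        = fromBlocks (1 : Matrix (Fin m) (Fin m) ℂ) (B.map Complex.ofReal) (0 : Matrix (Fin m) (Fin m) ℂ) (1 : Matrix (Fin m) (Fin m) ℂ) := by
      ext k l
      rcases k with i | i <;> rcases l with j | j <;>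
        simp [fromBlocks, Matrix.map_apply, Matrix.one_apply, apply_ite Complex.ofReal]
    have hblock : (Matrix.of fun i j : Fin m =>
        ((fromBlocks (1 : Matrix (Fin m) (Fin m) ℝ) B (0 : Matrix (Fin m) (Fin m) ℝ) (1 : Matrix (Fin m) (Fin m) ℝ)).map Complex.ofReal * V)
          (Sum.inl i) j) = X + B.map Complex.ofReal * Y := by
      ext i j
      rw [Matrix.of_apply, hSmap, Matrix.mul_apply]
      rw [Fintype.sum_sum_type]
      simp only [fromBlocks_apply₁₁, fromBlocks_apply₁₂]
      rw [Finset.sum_eq_single i]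
      · simp [Matrix.add_apply, Matrix.mul_apply, hX, hY]
      · intro b _ hb; simp [Matrix.one_apply_ne' hb]
      · simp
    rw [hblock]
    exact hB
end

section
/- Suppose a complex vector V = e^{K/2}(X^0, X^1, …, X^n, F_0, …, F_n) over a chart with coordinates z^α satisfies ⟨V, V̄⟩ = i and ⟨V, U_α⟩ = 0 with U_α = D_α V (Kähler covariant derivative), and the Hermitian form g_{αβ̄} = i⟨U_α, Ū_β⟩ is positive definite. Then the (n+1)×(n+1) matrix whose first n rows are D_α X^I and last row is X̄^I is invertible. -/
open Matrix
open scoped ComplexOrder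

/-!
If a combination `W = ∑ c_α U_α + c V̄` had vanishing upper half, it would lie in the Lagrangian
subspace `{x | x_inl = 0}`, so `⟨W, W̄⟩ = 0`. But `i⟨W, W̄⟩` is the Hermitian form of the Gram
matrix `i⟨Y_r, Ȳ_s⟩` of the family `Y = (U_α, V̄)` evaluated at `c̄`, and the relations
`⟨V, V̄⟩ = i`, `⟨V, U_α⟩ = 0` make that matrix block diagonal `diag(g, 1)`, hence positive definite.
So `c = 0`.
-/

/-- The bilinear symplectic pairing `⟨x,y⟩ = xᵀ Ω y` on `ℂ^{2k}`. -/
noncomputable def sympPair {k : ℕ} (x y : Fin k ⊕ Fin k → ℂ) : ℂ :=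
  x ⬝ᵥ ((fromBlocks 0 1 (-1) 0 : Matrix (Fin k ⊕ Fin k) (Fin k ⊕ Fin k) ℂ) *ᵥ y)

section SymplecticPairing

variable {k : ℕ}

theorem sympPair_eq_sum (x y : Fin k ⊕ Fin k → ℂ) :
    sympPair x y = ∑ i, (x (Sum.inl i) * y (Sum.inr i) - x (Sum.inr i) * y (Sum.inl i)) := by
  rw [sympPair, ← Sum.elim_comp_inl_inr x, ← Sum.elim_comp_inl_inr y, fromBlocks_mulVec]
  simp [dotProduct, neg_mulVec, sub_eq_add_neg, Finset.sum_add_distrib, mul_comm]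

theorem sympPair_swap (x y : Fin k ⊕ Fin k → ℂ) : sympPair y x = -sympPair x y := by
  simp only [sympPair_eq_sum, ← Finset.sum_neg_distrib]
  exact Finset.sum_congr rfl fun i _ => by ring

theorem star_sympPair (x y : Fin k ⊕ Fin k → ℂ) :
    star (sympPair x y) = sympPair (star x) (star y) := by
  simp [sympPair_eq_sum, star_sum]

theorem sympPair_eq_zero_of_inl_eq_zero {x y : Fin k ⊕ Fin k → ℂ} (hx : ∀ i, x (Sum.inl i) = 0)
    (hy : ∀ i, y (Sum.inl i) = 0) : sympPair x y = 0 := by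
  simp [sympPair_eq_sum, hx, hy]

theorem sympPair_vecMul_vecMul {ι κ : Type*} [Fintype ι] [Fintype κ] (a : ι → ℂ)
    (A : Matrix ι (Fin k ⊕ Fin k) ℂ) (b : κ → ℂ) (B : Matrix κ (Fin k ⊕ Fin k) ℂ) :
    sympPair (a ᵥ* A) (b ᵥ* B) = a ⬝ᵥ (of fun r s => sympPair (A r) (B s)) *ᵥ b := by
  rw [sympPair, ← mulVec_transpose B, mulVec_mulVec, dotProduct_mulVec, vecMul_vecMul,
    ← dotProduct_mulVec]
  rfl

end SymplecticPairing

theorem Matrix.PosDef.fromBlocks_zero {m n R : Type*} [Fintype m] [Fintype n] [Ring R]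
    [PartialOrder R] [StarRing R] [IsOrderedAddMonoid R] {A : Matrix m m R} {D : Matrix n n R}
    (hA : A.PosDef) (hD : D.PosDef) : (fromBlocks A 0 0 D).PosDef := by
  refine .of_dotProduct_mulVec_pos (hA.isHermitian.fromBlocks (by simp) hD.isHermitian)
    fun x hx => ?_
  obtain ⟨x₁, x₂, rfl⟩ : ∃ x₁ x₂, x = Sum.elim x₁ x₂ := ⟨_, _, (Sum.elim_comp_inl_inr x).symm⟩
  simp only [fromBlocks_mulVec, Sum.elim_comp_inl, Sum.elim_comp_inr, zero_mulVec, add_zero,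
    zero_add, Function.star_sumElim, sumElim_dotProduct_sumElim]
  have h₀ : x₁ ≠ 0 ∨ x₂ ≠ 0 := by
    by_contra! h
    exact hx (by simp [h.1, h.2])
  rcases h₀ with h | h
  · exact add_pos_of_pos_of_nonneg (hA.dotProduct_mulVec_pos h)
      (hD.posSemidef.dotProduct_mulVec_nonneg _)
  · exact add_pos_of_nonneg_of_pos (hA.posSemidef.dotProduct_mulVec_nonneg _)
      (hD.dotProduct_mulVec_pos h)

section SymplecticGram

variable {k : ℕ} {ι κ : Type*}

noncomputable def sympGram (Y : ι → Fin k ⊕ Fin k → ℂ) : Matrix ι ι ℂ :=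
  of fun r s => Complex.I * sympPair (Y r) (star (Y s))

theorem sympGram_comp (Y : ι → Fin k ⊕ Fin k → ℂ) (e : κ → ι) :
    sympGram (Y ∘ e) = (sympGram Y).submatrix e e :=
  rfl

theorem posDef_sympGram_sumElim [Fintype ι] [Fintype κ] {Y : ι → Fin k ⊕ Fin k → ℂ}
    {Z : κ → Fin k ⊕ Fin k → ℂ} (hY : (sympGram Y).PosDef) (hZ : (sympGram Z).PosDef)
    (hYZ : ∀ r s, sympPair (Y r) (star (Z s)) = 0) :
    (sympGram (Sum.elim Y Z)).PosDef := by
  convert hY.fromBlocks_zero hZ using 1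
  refine Matrix.ext fun r s => ?_
  rcases r with r | r <;> rcases s with s | s
  · rfl
  · simp [sympGram, hYZ]
  · have hZY : sympPair (Z r) (star (Y s)) = 0 := by
      rw [sympPair_swap, ← star_star (Z r), ← star_sympPair, hYZ, star_zero, neg_zero]
    simp [sympGram, hZY]
  · rfl

theorem eq_zero_of_vecMul_inl_eq_zero [Fintype ι] {Y : ι → Fin k ⊕ Fin k → ℂ}
    (hY : (sympGram Y).PosDef) {c : ι → ℂ} (hc : ∀ i, (c ᵥ* of Y) (Sum.inl i) = 0) : c = 0 := by
  set W := c ᵥ* of Y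
  have hstarW : star W = star c ᵥ* of (star ∘ Y) := by
    ext j
    simp [W, vecMul, dotProduct, star_sum]
  have hW : sympPair W (star W) = 0 :=
    sympPair_eq_zero_of_inl_eq_zero hc (by simp [hc])
  have hquad : c ⬝ᵥ sympGram Y *ᵥ star c = 0 := by
    rw [hstarW, sympPair_vecMul_vecMul] at hW
    have hG : sympGram Y = Complex.I • of fun r s => sympPair (of Y r) (of (star ∘ Y) s) := rfl
    rw [hG, smul_mulVec, dotProduct_smul, hW, smul_zero]
  by_contra hne
  have hpos := hY.dotProduct_mulVec_pos (star_ne_zero.mpr hne)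
  rw [star_star, hquad] at hpos
  exact lt_irrefl 0 hpos

theorem isUnit_det_of_posDef_sympGram {Y : Fin k → Fin k ⊕ Fin k → ℂ}
    (hY : (sympGram Y).PosDef) : IsUnit (of fun r i => Y r (Sum.inl i)).det := by
  rw [isUnit_iff_ne_zero, Ne, ← exists_vecMul_eq_zero_iff]
  rintro ⟨c, hc0, hc⟩
  exact hc0 (eq_zero_of_vecMul_inl_eq_zero hY (congrFun hc ·))

end SymplecticGram

theorem stmt12_general {n : ℕ} (V : Fin (n+1) ⊕ Fin (n+1) → ℂ)
    (U : Fin n → (Fin (n+1) ⊕ Fin (n+1) → ℂ))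
    (hVV : sympPair V (star V) = Complex.I)
    (hVU : ∀ α, sympPair V (U α) = 0)
    (hg : (Matrix.of fun α β : Fin n =>
      Complex.I * sympPair (U α) (star (U β))).PosDef) :
    IsUnit (Matrix.of fun (r I : Fin (n+1)) =>
      Fin.lastCases (motive := fun _ => ℂ) ((star V) (Sum.inl I)) (fun α => U α (Sum.inl I)) r).det := by
  set Y : Fin (n + 1) → Fin (n + 1) ⊕ Fin (n + 1) → ℂ := Fin.lastCases (star V) U
  have hY : Y = Sum.elim U (fun _ : Fin 1 => star V) ∘ finSumFinEquiv.symm := by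
    funext r
    induction r using Fin.lastCases <;> simp [Y]
  have hV : sympGram (fun _ : Fin 1 => star V) = 1 := by
    have : sympPair (star V) V = -Complex.I := by rw [sympPair_swap, hVV]
    ext i j
    rw [Subsingleton.elim i j]
    simp [sympGram, this]
  have hUstarV : ∀ α (i : Fin 1), sympPair (U α) (star (star V)) = 0 := fun α _ => by
    rw [star_star, sympPair_swap, hVU, neg_zero]
  have hGram : (sympGram Y).PosDef := by
    rw [hY, sympGram_comp]
    exact (posDef_sympGram_sumElim hg (hV ▸ .one) hUstarV).submatrix
      finSumFinEquiv.symm.injective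
  convert isUnit_det_of_posDef_sympGram hGram using 3
  ext r I
  induction r using Fin.lastCases <;> simp [Y]

/-- If `⟨V,V̄⟩ = i`, `⟨V,U_α⟩ = 0`, `⟨U_α,V̄⟩ = 0` and `g_{αβ̄} = i⟨U_α,Ū_β⟩` is positive
definite, then the matrix whose rows are the upper halves of the `U_α` and of `V̄`
is invertible. -/
theorem stmt12 {n : ℕ} (V : Fin (n+1) ⊕ Fin (n+1) → ℂ)
    (U : Fin n → (Fin (n+1) ⊕ Fin (n+1) → ℂ))
    (hVV : sympPair V (star V) = Complex.I)
    (hVU : ∀ α, sympPair V (U α) = 0)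
    (hUV : ∀ α, sympPair (U α) (star V) = 0)
    (hg : (Matrix.of fun α β : Fin n =>
      Complex.I * sympPair (U α) (star (U β))).PosDef) :
    IsUnit (Matrix.of fun (r I : Fin (n+1)) =>
      Fin.lastCases (motive := fun _ => ℂ) ((star V) (Sum.inl I)) (fun α => U α (Sum.inl I)) r).det :=
  stmt12_general V U hVV hVU hg
end

section
/- Let V, U_1, …, U_n ∈ ℂ^{2(n+1)}. If the (n+1)×(n+1) Hermitian matrix i·[[⟨U_α, Ū_β̄⟩, ⟨U_α, V⟩],[⟨V̄, Ū_β̄⟩, ⟨V̄, V⟩]] (α, β = 1, …, n) is positive definite, then the (n+1)×(n+1) matrix whose rows are the upper halves (first n+1 components) of U_1, …, U_n together with the upper half of V̄ is invertible. -/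
open Matrix
open scoped ComplexOrder

lemma sympPair_apply {k : ℕ} (x y : Fin k ⊕ Fin k → ℂ) :
    sympPair x y = (∑ i, x (Sum.inl i) * y (Sum.inr i)) - ∑ i, x (Sum.inr i) * y (Sum.inl i) := by
  simp [sympPair, dotProduct, mulVec, fromBlocks, Fintype.sum_sum_type, Matrix.one_apply,
    Finset.mul_sum, mul_ite, Finset.sum_ite_eq, Finset.sum_sub_distrib]
  ring

lemma swap_sum {α β : Type*} [Fintype α] [Fintype β] (u : α → ℂ) (f : β → ℂ) (g : α → β → ℂ) :
    ∑ p, u p * ∑ i, f i * g p i = ∑ i, f i * ∑ p, u p * g p i := by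
  simp_rw [Finset.mul_sum]
  rw [Finset.sum_comm]
  exact Finset.sum_congr rfl fun i _ => Finset.sum_congr rfl fun p _ => by ring

/-- If the matrix `i·[[⟨U_α,Ū_β⟩, ⟨U_α,V⟩],[⟨V̄,Ū_β⟩, ⟨V̄,V⟩]]` is positive definite, then
the matrix whose rows are the upper halves of the `U_α` together with that of `V̄`
is invertible. -/
theorem stmt13 {n : ℕ} (V : Fin (n+1) ⊕ Fin (n+1) → ℂ)
    (U : Fin n → (Fin (n+1) ⊕ Fin (n+1) → ℂ))
    (hpos : (Matrix.of fun (o p : Option (Fin n)) =>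
      Complex.I * sympPair (o.elim (star V) U)
        (p.elim V (fun β => star (U β)))).PosDef) :
    IsUnit (Matrix.of fun (r I : Fin (n+1)) =>
      Fin.lastCases (motive := fun _ => ℂ) ((star V) (Sum.inl I)) (fun α => U α (Sum.inl I)) r).det := by
  by_contra hdet
  rw [isUnit_iff_ne_zero, not_not] at hdet
  obtain ⟨c, hc, hcA⟩ := Matrix.exists_vecMul_eq_zero_iff.mpr hdet
  set X : Option (Fin n) → (Fin (n+1) ⊕ Fin (n+1) → ℂ) := fun o => o.elim (star V) U with hXdef
  set x : Option (Fin n) → ℂ := fun o => starRingEnd ℂ (c (o.elim (Fin.last n) Fin.castSucc)) with hxdef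
  have hx : x ≠ 0 := by
    intro h
    apply hc
    funext r
    induction r using Fin.lastCases with
    | last =>
      have := congrFun h none
      simpa [hxdef] using this
    | cast α =>
      have := congrFun h (some α)
      simpa [hxdef] using this
  have hW : ∀ i : Fin (n+1), ∑ o : Option (Fin n), (starRingEnd ℂ) (x o) * X o (Sum.inl i) = 0 := by
    intro i
    have h0 := congrFun hcA i
    simp only [Matrix.vecMul, dotProduct, Matrix.of_apply, Pi.zero_apply,
      Fin.sum_univ_castSucc, Fin.lastCases_castSucc, Fin.lastCases_last] at h0
    rw [Fintype.sum_option]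
    simpa [hxdef, hXdef, add_comm] using h0
  have hC : ∀ i : Fin (n+1), ∑ p : Option (Fin n), x p * (starRingEnd ℂ) (X p (Sum.inl i)) = 0 := by
    intro i
    have := congrArg (starRingEnd ℂ) (hW i)
    simpa [map_sum] using this
  have hY : ∀ p : Option (Fin n), (p.elim V fun β => star (U β)) = star (X p) := by
    intro p
    cases p <;> simp [hXdef]
  have hlt := hpos.dotProduct_mulVec_pos hx
  have hQ : star x ⬝ᵥ ((Matrix.of fun (o p : Option (Fin n)) =>
      Complex.I * sympPair (o.elim (star V) U)
        (p.elim V (fun β => star (U β)))) *ᵥ x) = 0 := by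
    calc star x ⬝ᵥ ((Matrix.of fun (o p : Option (Fin n)) =>
        Complex.I * sympPair (o.elim (star V) U)
          (p.elim V (fun β => star (U β)))) *ᵥ x)
        = ∑ o, (starRingEnd ℂ) (x o) * ∑ p, (Complex.I * sympPair (X o) (star (X p))) * x p := by
          simp only [dotProduct, mulVec, Matrix.of_apply, Pi.star_apply, hY]
          rfl
      _ = ∑ o, (starRingEnd ℂ) (x o) *
            (Complex.I * ∑ i, (∑ p, x p * (starRingEnd ℂ) (X p (Sum.inr i))) * X o (Sum.inl i)) := by
          refine Finset.sum_congr rfl fun o _ => ?_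
          congr 1
          have e1 : ∀ p, (Complex.I * sympPair (X o) (star (X p))) * x p =
              Complex.I * (x p * ∑ i, X o (Sum.inl i) * (starRingEnd ℂ) (X p (Sum.inr i)))
              - Complex.I * (x p * ∑ i, X o (Sum.inr i) * (starRingEnd ℂ) (X p (Sum.inl i))) := by
            intro p
            rw [sympPair_apply]
            simp only [Pi.star_apply, Complex.star_def]
            ring
          simp_rw [e1]
          rw [Finset.sum_sub_distrib, ← Finset.mul_sum, ← Finset.mul_sum,
            swap_sum x (fun i => X o (Sum.inl i)) (fun p i => (starRingEnd ℂ) (X p (Sum.inr i))),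
            swap_sum x (fun i => X o (Sum.inr i)) (fun p i => (starRingEnd ℂ) (X p (Sum.inl i)))]
          have : ∀ i : Fin (n+1), X o (Sum.inr i) * ∑ p, x p * (starRingEnd ℂ) (X p (Sum.inl i)) = 0 := by
            intro i; rw [hC i, mul_zero]
          rw [Finset.sum_congr rfl fun i _ => this i]
          simp only [Finset.sum_const_zero, mul_zero, sub_zero]
          congr 1
          exact Finset.sum_congr rfl fun i _ => by ring
      _ = Complex.I * ∑ o, (starRingEnd ℂ) (x o) *
            ∑ i, (∑ p, x p * (starRingEnd ℂ) (X p (Sum.inr i))) * X o (Sum.inl i) := by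
          rw [Finset.mul_sum]
          exact Finset.sum_congr rfl fun o _ => by ring
      _ = Complex.I * ∑ i, (∑ p, x p * (starRingEnd ℂ) (X p (Sum.inr i))) *
            ∑ o, (starRingEnd ℂ) (x o) * X o (Sum.inl i) := by
          rw [swap_sum (fun o => (starRingEnd ℂ) (x o))
            (fun i => ∑ p, x p * (starRingEnd ℂ) (X p (Sum.inr i)))
            (fun o i => X o (Sum.inl i))]
      _ = 0 := by
          simp [hW]
  rw [hQ] at hlt
  exact lt_irrefl 0 hlt
end

section
/- Let X^I, F_I (I = 0,…,n) be smooth ℂ-valued functions on a connected open set in ℂ^n satisfying the homogeneity relation F_I = X^J ∂F_I/∂X^J (first-degree homogeneity when F_I are viewed as functions of X), such that the matrix (∂_α X^I; X^I) is invertible, and the symplectic conditions hold: ∂_α X^I ∂_β X^J ∂_{[I} F_{J]} = 0 for all α,β, and X^I ∂_α F_I - F_I ∂_α X^I = 0 for all α (equivalently ∂_α X^I X^J ∂_{[I}F_{J]} = 0). Then ∂_{[I} F_{J]} = 0, and hence there exists locally a holomorphic function F(X) with F_I = ∂F/∂X^I. -/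
/-!
Write `A_{IJ} = ∂_I F_J - ∂_J F_I` and let `M` be the matrix with rows `∂_α X` and `X`.
The symplectic conditions say that the entries of `M A Mᵀ` vanish, except possibly the
`(X, X)` entry `Xᵀ A X`, which vanishes anyway because `A` is antisymmetric. As `M` is
invertible, `A = 0`. Then Euler's relation makes `F = ½ X^I F_I` a prepotential:
`∂_J F = ½ (F_J + X^I ∂_J F_I) = ½ (F_J + X^I ∂_I F_J) = F_J`.
-/

open Matrix

namespace Matrix

variable {m R : Type*} [Fintype m] [CommRing R]

theorem dotProduct_mulVec_eq_sum_sum (u v : m → R) (A : Matrix m m R) :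
    u ⬝ᵥ (A *ᵥ v) = ∑ i, ∑ j, u i * v j * A i j := by
  simp only [dotProduct, mulVec, Finset.mul_sum]
  exact Finset.sum_congr rfl fun i _ => Finset.sum_congr rfl fun j _ => by ring

theorem dotProduct_mulVec_comm_of_transpose_eq_neg {A : Matrix m m R} (hA : Aᵀ = -A)
    (u v : m → R) : v ⬝ᵥ (A *ᵥ u) = -(u ⬝ᵥ (A *ᵥ v)) := by
  rw [dotProduct_mulVec, ← mulVec_transpose, hA, neg_mulVec, neg_dotProduct, dotProduct_comm]

theorem dotProduct_mulVec_self_of_transpose_eq_neg [IsAddTorsionFree R] {A : Matrix m m R}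
    (hA : Aᵀ = -A) (v : m → R) : v ⬝ᵥ (A *ᵥ v) = 0 :=
  self_eq_neg.mp (dotProduct_mulVec_comm_of_transpose_eq_neg hA v v)

theorem eq_zero_of_mul_mul_transpose_eq_zero [DecidableEq m] {M A : Matrix m m R}
    (hM : IsUnit M.det) (h : M * A * Mᵀ = 0) : A = 0 := by
  have hM' : IsUnit M := (isUnit_iff_isUnit_det M).mpr hM
  have hMt : IsUnit Mᵀ := (isUnit_transpose M).mpr hM'
  exact hM'.mul_right_eq_zero.1 (hMt.mul_left_eq_zero.1 h)

theorem eq_zero_of_transpose_eq_neg_of_lastCases {n : ℕ} [IsAddTorsionFree R]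
    {A : Matrix (Fin (n + 1)) (Fin (n + 1)) R} (hA : Aᵀ = -A) (x : Fin (n + 1) → R)
    (e : Fin n → Fin (n + 1) → R)
    (hM : IsUnit (of fun r I => Fin.lastCases (motive := fun _ => R) (x I) (fun α => e α I) r).det)
    (he : ∀ α β, e α ⬝ᵥ (A *ᵥ e β) = 0) (hx : ∀ α, e α ⬝ᵥ (A *ᵥ x) = 0) : A = 0 := by
  set M : Matrix (Fin (n + 1)) (Fin (n + 1)) R :=
    of fun r I => Fin.lastCases (motive := fun _ => R) (x I) (fun α => e α I) r
  have hM_last : M (Fin.last n) = x := funext fun I => by simp [M]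
  have hM_castSucc (α : Fin n) : M α.castSucc = e α := funext fun I => by simp [M]
  refine eq_zero_of_mul_mul_transpose_eq_zero hM (ext fun r s => ?_)
  rw [mul_mul_apply, transpose_transpose, zero_apply]
  induction r using Fin.lastCases with
  | last =>
    induction s using Fin.lastCases with
    | last => rw [hM_last]; exact dotProduct_mulVec_self_of_transpose_eq_neg hA x
    | cast β =>
      rw [hM_last, hM_castSucc, dotProduct_mulVec_comm_of_transpose_eq_neg hA, hx, neg_zero]
  | cast α =>
    induction s using Fin.lastCases with
    | last => rw [hM_last, hM_castSucc, hx]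
    | cast β => rw [hM_castSucc, hM_castSucc, he]

end Matrix

section Prepotential

variable {ι 𝕜 : Type*} [Fintype ι] [DecidableEq ι] [NontriviallyNormedField 𝕜]
  {F : ι → (ι → 𝕜) → 𝕜} {X : ι → 𝕜}

theorem fderiv_sum_mul_apply_single (hF : ∀ i, DifferentiableAt 𝕜 (F i) X) (j : ι) :
    fderiv 𝕜 (fun Y => ∑ i, Y i * F i Y) X (Pi.single j 1) =
      ∑ i, X i * fderiv 𝕜 (F i) X (Pi.single j 1) + F j X := by
  have hsum : HasFDerivAt (fun Y => ∑ i, Y i * F i Y)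
      (∑ i, (X i • fderiv 𝕜 (F i) X + F i X • ContinuousLinearMap.proj i)) X :=
    HasFDerivAt.fun_sum fun i _ =>
      (ContinuousLinearMap.proj (R := 𝕜) (φ := fun _ : ι => 𝕜) i).hasFDerivAt.mul
        (hF i).hasFDerivAt
  simp [hsum.fderiv, Finset.sum_add_distrib, Pi.single_apply]

theorem fderiv_half_sum_mul_apply_single [CharZero 𝕜] (hF : ∀ i, DifferentiableAt 𝕜 (F i) X)
    (j : ι) (hsymm : ∀ i, fderiv 𝕜 (F i) X (Pi.single j 1) = fderiv 𝕜 (F j) X (Pi.single i 1))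
    (hhom : F j X = ∑ i, X i * fderiv 𝕜 (F j) X (Pi.single i 1)) :
    fderiv 𝕜 (fun Y => (2⁻¹ : 𝕜) * ∑ i, Y i * F i Y) X (Pi.single j 1) = F j X := by
  have hsum : DifferentiableAt 𝕜 (fun Y => ∑ i, Y i * F i Y) X :=
    DifferentiableAt.fun_sum fun i _ => (differentiableAt_apply i X).mul (hF i)
  rw [fderiv_const_mul hsum, _root_.smul_apply, fderiv_sum_mul_apply_single hF,
    smul_eq_mul]
  simp only [hsymm, ← hhom]
  ring

end Prepotential

theorem stmt15_general {n : ℕ} (Udom : Set (Fin (n+1) → ℂ)) (hopen : IsOpen Udom)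
    (F : Fin (n+1) → (Fin (n+1) → ℂ) → ℂ)
    (hdiff : ∀ I, DifferentiableOn ℂ (F I) Udom)
    (e : (Fin (n+1) → ℂ) → Fin n → (Fin (n+1) → ℂ))
    (hhom : ∀ X ∈ Udom, ∀ I, F I X = ∑ J, X J * fderiv ℂ (F I) X (Pi.single J 1))
    (hinv : ∀ X ∈ Udom, IsUnit (Matrix.of fun (r I : Fin (n+1)) =>
        Fin.lastCases (motive := fun _ => ℂ) (X I) (fun α => e X α I) r).det)
    (hsymp1 : ∀ X ∈ Udom, ∀ α β : Fin n, ∑ I, ∑ J, e X α I * e X β J *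
        (fderiv ℂ (F J) X (Pi.single I 1) - fderiv ℂ (F I) X (Pi.single J 1)) = 0)
    (hsymp2 : ∀ X ∈ Udom, ∀ α : Fin n, ∑ I, ∑ J, e X α I * X J *
        (fderiv ℂ (F J) X (Pi.single I 1) - fderiv ℂ (F I) X (Pi.single J 1)) = 0) :
    (∀ X ∈ Udom, ∀ I J,
      fderiv ℂ (F J) X (Pi.single I 1) = fderiv ℂ (F I) X (Pi.single J 1)) ∧
    ∀ X₀ ∈ Udom, ∃ Vnb ∈ nhds X₀, ∃ Fpre : (Fin (n+1) → ℂ) → ℂ,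
      ∀ X ∈ Vnb, ∀ I, fderiv ℂ Fpre X (Pi.single I 1) = F I X := by
  have hsymm : ∀ X ∈ Udom, ∀ I J,
      fderiv ℂ (F J) X (Pi.single I 1) = fderiv ℂ (F I) X (Pi.single J 1) := by
    intro X hX I J
    set A : Matrix (Fin (n+1)) (Fin (n+1)) ℂ := of fun I J =>
      fderiv ℂ (F J) X (Pi.single I 1) - fderiv ℂ (F I) X (Pi.single J 1)
    have hA : Aᵀ = -A := ext fun I J => by simp [A]
    have hA0 : A = 0 := eq_zero_of_transpose_eq_neg_of_lastCases hA X (e X) (hinv X hX)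
      (fun α β => (dotProduct_mulVec_eq_sum_sum _ _ A).trans (hsymp1 X hX α β))
      (fun α => (dotProduct_mulVec_eq_sum_sum _ _ A).trans (hsymp2 X hX α))
    exact sub_eq_zero.mp (congrFun₂ hA0 I J)
  refine ⟨hsymm, fun X₀ hX₀ => ⟨Udom, hopen.mem_nhds hX₀,
    fun Y => (2⁻¹ : ℂ) * ∑ I, Y I * F I Y, fun X hX J => ?_⟩⟩
  exact fderiv_half_sum_mul_apply_single
    (fun I => (hdiff I).differentiableAt (hopen.mem_nhds hX)) J (hsymm X hX J) (hhom X hX J)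

/-- Lemma B.4: if `F_I(X)` are first-degree homogeneous, the matrix with rows `e_α = ∂_α X`
and `X` is invertible, and the symplectic contraction conditions hold, then
`∂_{[I}F_{J]} = 0`, and hence locally a prepotential `F` with `F_I = ∂_I F` exists. -/
theorem stmt15 {n : ℕ} (Udom : Set (Fin (n+1) → ℂ)) (hopen : IsOpen Udom)
    (hconn : IsConnected Udom)
    (F : Fin (n+1) → (Fin (n+1) → ℂ) → ℂ)
    (hdiff : ∀ I, DifferentiableOn ℂ (F I) Udom)
    (e : (Fin (n+1) → ℂ) → Fin n → (Fin (n+1) → ℂ))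
    (hhom : ∀ X ∈ Udom, ∀ I, F I X = ∑ J, X J * fderiv ℂ (F I) X (Pi.single J 1))
    (hinv : ∀ X ∈ Udom, IsUnit (Matrix.of fun (r I : Fin (n+1)) =>
        Fin.lastCases (motive := fun _ => ℂ) (X I) (fun α => e X α I) r).det)
    (hsymp1 : ∀ X ∈ Udom, ∀ α β : Fin n, ∑ I, ∑ J, e X α I * e X β J *
        (fderiv ℂ (F J) X (Pi.single I 1) - fderiv ℂ (F I) X (Pi.single J 1)) = 0)
    (hsymp2 : ∀ X ∈ Udom, ∀ α : Fin n, ∑ I, ∑ J, e X α I * X J *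
        (fderiv ℂ (F J) X (Pi.single I 1) - fderiv ℂ (F I) X (Pi.single J 1)) = 0) :
    (∀ X ∈ Udom, ∀ I J,
      fderiv ℂ (F J) X (Pi.single I 1) = fderiv ℂ (F I) X (Pi.single J 1)) ∧
    ∀ X₀ ∈ Udom, ∃ Vnb ∈ nhds X₀, ∃ Fpre : (Fin (n+1) → ℂ) → ℂ,
      ∀ X ∈ Vnb, ∀ I, fderiv ℂ Fpre X (Pi.single I 1) = F I X :=
  stmt15_general Udom hopen F hdiff e hhom hinv hsymp1 hsymp2
end
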